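/- Vector Sum of Vector-Encodings (Lemma 2.2): Let 0 ≤ τ ≤ 1 and let Ũ_ψ and Ũ_φ be unitary matrices of size 2^{c+n}×2^{c+n} that are an (α,c,ε₀)-VE for |ψ⟩ ∈ ℂ^{2^n} and a (β,c,ε₁)-VE for |φ⟩ ∈ ℂ^{2^n}, respectively. Define |Γ⟩ := (τ/α)|ψ⟩ + ((1−τ)/β)|φ⟩, 𝒩 := ‖|Γ⟩‖₂, and assume 𝒩 > 0. Let R_τ be the 2×2 unitary with rows (√τ, −√(1−τ)) and (√(1−τ), √τ), and define the unitary V := (R_τ† ⊗ I_{c+n}) (|0⟩⟨0| ⊗ Ũ_ψ + |1⟩⟨1| ⊗ Ũ_φ) (R_τ ⊗ I_{c+n}) on ℂ^{2^{1+c+n}}. Then V is a (𝒩^{-1}, c+1, (ε₀/α + ε₁/β)/𝒩)-VE for |Γ⟩/𝒩. -/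

import Mathlib

open scoped Kronecker Matrix

noncomputable section

/-- Reinterpret a plain function as an element of `EuclideanSpace`. -/
def toEuc {𝕜 : Type*} [RCLike 𝕜] {ι : Type*} (v : ι → 𝕜) : EuclideanSpace 𝕜 ι := WithLp.toLp 2 v

/-- The vector encoded in the first block of the first column of `U`:
`(⟨0| ⊗ I) U |0⟩`. -/
def encVec {I N : Type*} [Zero I] [Zero N] (U : Matrix (I × N) (I × N) ℂ) :
    EuclideanSpace ℂ N := toEuc fun i => U (0, i) (0, 0)

/-- `U` is an `(α, ·, ε)`-vector-encoding of `ψ`: `U` is unitary and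
`‖ψ - α (⟨0| ⊗ I) U |0⟩‖₂ ≤ ε`. -/
def IsVE {I N : Type*} [Fintype I] [DecidableEq I] [Zero I] [Fintype N] [DecidableEq N] [Zero N]
    (U : Matrix (I × N) (I × N) ℂ) (α ε : ℝ) (ψ : EuclideanSpace ℂ N) : Prop :=
  U ∈ Matrix.unitaryGroup (I × N) ℂ ∧ ‖ψ - (α : ℂ) • encVec U‖ ≤ ε

/-! Conjugating the controlled unitary `|0⟩⟨0| ⊗ Uψ + |1⟩⟨1| ⊗ Uφ` by `Rτ ⊗ I` keeps it unitary,
and its `⟨0|·|0⟩` block on the control qubit is `|Rτ₀₀|² Uψ + |Rτ₁₀|² Uφ = τ Uψ + (1 - τ) Uφ`.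
So `V` encodes `τ u + (1 - τ) v`, where `u`, `v` are the vectors encoded by `Uψ`, `Uφ`, and
`Γ - (τ u + (1 - τ) v) = (τ/α) (ψ - α u) + ((1 - τ)/β) (φ - β v)` has norm at most
`ε₀/α + ε₁/β`. Scaling by `𝒩⁻¹` gives the claim. -/

namespace Matrix

variable {R ι κ m p : Type*}

theorem reindex_mem_unitaryGroup [CommRing R] [StarRing R] [Fintype m] [DecidableEq m]
    [Fintype p] [DecidableEq p] (e : m ≃ p) {U : Matrix m m R} (hU : U ∈ unitaryGroup m R) :
    reindex e e U ∈ unitaryGroup p R := by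
  rw [mem_unitaryGroup_iff'] at *
  rw [star_eq_conjTranspose, reindex_apply, conjTranspose_submatrix, submatrix_mul_equiv,
    ← star_eq_conjTranspose, hU, submatrix_one_equiv]

theorem conjTranspose_mul_single_mul_apply [CommSemiring R] [StarRing R] [Fintype ι]
    [DecidableEq ι] (W : Matrix ι κ R) (i : ι) (j k : κ) :
    (Wᴴ * single i i (1 : R) * W) j k = star (W i j) * W i k := by
  simp [mul_apply, single, ite_and, Finset.sum_ite_eq]

theorem kronecker_one_mul_kronecker_mul_kronecker_one [CommSemiring R] [Fintype ι]
    [Fintype p] [DecidableEq p] (X Y P : Matrix ι ι R) (M : Matrix p p R) :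
    (X ⊗ₖ (1 : Matrix p p R)) * (P ⊗ₖ M) * (Y ⊗ₖ (1 : Matrix p p R)) = (X * P * Y) ⊗ₖ M := by
  rw [← mul_kronecker_mul, ← mul_kronecker_mul, one_mul, mul_one]

theorem single_kronecker_add_single_kronecker_mem_unitaryGroup [CommRing R] [StarRing R]
    [Fintype p] [DecidableEq p] {A B : Matrix p p R}
    (hA : A ∈ unitaryGroup p R) (hB : B ∈ unitaryGroup p R) :
    single (0 : Fin 2) (0 : Fin 2) (1 : R) ⊗ₖ A + single (1 : Fin 2) (1 : Fin 2) (1 : R) ⊗ₖ B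
      ∈ unitaryGroup (Fin 2 × p) R := by
  rw [mem_unitaryGroup_iff', star_eq_conjTranspose] at *
  have hsum : single (0 : Fin 2) (0 : Fin 2) (1 : R) + single 1 1 1 = 1 := by
    ext a b; fin_cases a <;> fin_cases b <;> simp
  simp only [conjTranspose_add, conjTranspose_kronecker, conjTranspose_single, star_one, add_mul,
    mul_add, ← mul_kronecker_mul, single_mul_single_same, mul_one, hA, hB]
  simp [← add_kronecker, hsum]

end Matrix

def rotationMatrix (τ : ℝ) : Matrix (Fin 2) (Fin 2) ℂ :=
  !![(Real.sqrt τ : ℂ), -(Real.sqrt (1 - τ) : ℂ); (Real.sqrt (1 - τ) : ℂ), (Real.sqrt τ : ℂ)]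

theorem star_rotationMatrix_zero_zero_mul {τ : ℝ} (hτ0 : 0 ≤ τ) :
    star (rotationMatrix τ 0 0) * rotationMatrix τ 0 0 = τ := by
  simp [rotationMatrix, ← Complex.ofReal_mul, Real.mul_self_sqrt hτ0]

theorem star_rotationMatrix_one_zero_mul {τ : ℝ} (hτ1 : τ ≤ 1) :
    star (rotationMatrix τ 1 0) * rotationMatrix τ 1 0 = ((1 - τ : ℝ) : ℂ) := by
  simp [rotationMatrix, ← Complex.ofReal_mul, Real.mul_self_sqrt (sub_nonneg.2 hτ1)]

theorem rotationMatrix_mem_unitaryGroup {τ : ℝ} (hτ0 : 0 ≤ τ) (hτ1 : τ ≤ 1) :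
    rotationMatrix τ ∈ Matrix.unitaryGroup (Fin 2) ℂ := by
  rw [Matrix.mem_unitaryGroup_iff']
  have hs : (Real.sqrt τ : ℂ) * Real.sqrt τ = τ := by
    rw [← Complex.ofReal_mul, Real.mul_self_sqrt hτ0]
  have hc : (Real.sqrt (1 - τ) : ℂ) * Real.sqrt (1 - τ) = 1 - τ := by
    rw [← Complex.ofReal_mul, Real.mul_self_sqrt (sub_nonneg.2 hτ1)]; push_cast; ring
  ext i j
  fin_cases i <;> fin_cases j <;>
    simp [rotationMatrix, Matrix.mul_apply, Fin.sum_univ_two] <;>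
    first | linear_combination hs + hc | ring

theorem IsVE.smul {I N : Type*} [Fintype I] [DecidableEq I] [Zero I] [Fintype N] [DecidableEq N]
    [Zero N] {U : Matrix (I × N) (I × N) ℂ} {α ε : ℝ} {ψ : EuclideanSpace ℂ N}
    (h : IsVE U α ε ψ) {r : ℝ} (hr : 0 ≤ r) : IsVE U (r * α) (r * ε) (r • ψ) := by
  refine ⟨h.1, ?_⟩
  have : r • ψ - ((r * α : ℝ) : ℂ) • encVec U = r • (ψ - (α : ℂ) • encVec U) := by
    rw [smul_sub, Complex.ofReal_mul, mul_smul, Complex.coe_smul]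
  rw [this, norm_smul, Real.norm_of_nonneg hr]
  exact mul_le_mul_of_nonneg_left h.2 hr

theorem norm_smul_add_smul_sub_le {E : Type*} [SeminormedAddCommGroup E] [NormedSpace ℂ E]
    {ψ φ u v : E} {α β ε₀ ε₁ s t : ℝ} (hs : 0 ≤ s) (ht : 0 ≤ t)
    (hψ : ‖ψ - (α : ℂ) • u‖ ≤ ε₀) (hφ : ‖φ - (β : ℂ) • v‖ ≤ ε₁) :
    ‖((s : ℂ) • ψ + (t : ℂ) • φ) - (((s * α : ℝ) : ℂ) • u + ((t * β : ℝ) : ℂ) • v)‖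
      ≤ s * ε₀ + t * ε₁ := by
  have : ((s : ℂ) • ψ + (t : ℂ) • φ) - (((s * α : ℝ) : ℂ) • u + ((t * β : ℝ) : ℂ) • v)
      = (s : ℂ) • (ψ - (α : ℂ) • u) + (t : ℂ) • (φ - (β : ℂ) • v) := by
    simp only [Complex.ofReal_mul, smul_sub, mul_smul]; abel
  rw [this]
  refine (norm_add_le _ _).trans (add_le_add ?_ ?_) <;>
    rw [norm_smul, Complex.norm_real, Real.norm_of_nonneg ‹_›] <;> gcongr

section conjugatedControl

variable {p : Type*} [Fintype p] [DecidableEq p] {τ : ℝ}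

theorem conj_rotationMatrix_controlled_mem_unitaryGroup (hτ0 : 0 ≤ τ) (hτ1 : τ ≤ 1)
    {A B : Matrix p p ℂ} (hA : A ∈ Matrix.unitaryGroup p ℂ) (hB : B ∈ Matrix.unitaryGroup p ℂ) :
    (rotationMatrix τ)ᴴ ⊗ₖ (1 : Matrix p p ℂ)
        * (Matrix.single (0 : Fin 2) (0 : Fin 2) (1 : ℂ) ⊗ₖ A
            + Matrix.single (1 : Fin 2) (1 : Fin 2) (1 : ℂ) ⊗ₖ B)
        * (rotationMatrix τ ⊗ₖ (1 : Matrix p p ℂ)) ∈ Matrix.unitaryGroup (Fin 2 × p) ℂ :=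
  have hR := rotationMatrix_mem_unitaryGroup hτ0 hτ1
  mul_mem (mul_mem (Matrix.kronecker_mem_unitary (Unitary.star_mem hR) (one_mem _))
      (Matrix.single_kronecker_add_single_kronecker_mem_unitaryGroup hA hB))
    (Matrix.kronecker_mem_unitary hR (one_mem _))

theorem conj_rotationMatrix_controlled_apply_zero_zero (hτ0 : 0 ≤ τ) (hτ1 : τ ≤ 1)
    (A B : Matrix p p ℂ) (x y : p) :
    ((rotationMatrix τ)ᴴ ⊗ₖ (1 : Matrix p p ℂ)
        * (Matrix.single (0 : Fin 2) (0 : Fin 2) (1 : ℂ) ⊗ₖ A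
            + Matrix.single (1 : Fin 2) (1 : Fin 2) (1 : ℂ) ⊗ₖ B)
        * (rotationMatrix τ ⊗ₖ (1 : Matrix p p ℂ))) (0, x) (0, y)
      = τ * A x y + ((1 - τ : ℝ) : ℂ) * B x y := by
  rw [mul_add, add_mul, Matrix.kronecker_one_mul_kronecker_mul_kronecker_one,
    Matrix.kronecker_one_mul_kronecker_mul_kronecker_one]
  simp only [Matrix.add_apply, Matrix.kroneckerMap_apply,
    Matrix.conjTranspose_mul_single_mul_apply, star_rotationMatrix_zero_zero_mul hτ0,
    star_rotationMatrix_one_zero_mul hτ1]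

end conjugatedControl

theorem encVec_reindex_prodAssoc_symm {A I N : Type*} [Zero A] [Zero I] [Zero N]
    (V : Matrix (A × I × N) (A × I × N) ℂ) :
    encVec (Matrix.reindex (Equiv.prodAssoc A I N).symm (Equiv.prodAssoc A I N).symm V)
      = toEuc fun i => V (0, 0, i) (0, 0, 0) :=
  rfl

theorem vector_sum_of_vector_encodings
    (c n : ℕ) (τ α β ε₀ ε₁ : ℝ)
    (hτ0 : 0 ≤ τ) (hτ1 : τ ≤ 1)
    (hα : 1 ≤ α) (hβ : 1 ≤ β) (hε₀ : 0 ≤ ε₀) (hε₁ : 0 ≤ ε₁)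
    (Uψ Uφ : Matrix (Fin (2^c) × Fin (2^n)) (Fin (2^c) × Fin (2^n)) ℂ)
    (ψ φ : EuclideanSpace ℂ (Fin (2^n)))
    (hUψ : IsVE Uψ α ε₀ ψ) (hUφ : IsVE Uφ β ε₁ φ)
    (Γ : EuclideanSpace ℂ (Fin (2^n)))
    (hΓ : Γ = ((τ / α : ℝ) : ℂ) • ψ + (((1 - τ) / β : ℝ) : ℂ) • φ)
    (𝒩 : ℝ) (h𝒩pos : 0 < 𝒩)
    (Rτ : Matrix (Fin 2) (Fin 2) ℂ)
    (hR : Rτ = !![(Real.sqrt τ : ℂ), -(Real.sqrt (1 - τ) : ℂ);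
                  (Real.sqrt (1 - τ) : ℂ), (Real.sqrt τ : ℂ)])
    (V : Matrix (Fin 2 × (Fin (2^c) × Fin (2^n))) (Fin 2 × (Fin (2^c) × Fin (2^n))) ℂ)
    (hV : V = (Rτᴴ ⊗ₖ (1 : Matrix (Fin (2^c) × Fin (2^n)) (Fin (2^c) × Fin (2^n)) ℂ))
        * (Matrix.single (0 : Fin 2) (0 : Fin 2) (1 : ℂ) ⊗ₖ Uψ
            + Matrix.single (1 : Fin 2) (1 : Fin 2) (1 : ℂ) ⊗ₖ Uφ)
        * (Rτ ⊗ₖ (1 : Matrix (Fin (2^c) × Fin (2^n)) (Fin (2^c) × Fin (2^n)) ℂ))) :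
    IsVE (Matrix.reindex (Equiv.prodAssoc (Fin 2) (Fin (2^c)) (Fin (2^n))).symm
        (Equiv.prodAssoc (Fin 2) (Fin (2^c)) (Fin (2^n))).symm V)
      𝒩⁻¹ ((ε₀ / α + ε₁ / β) / 𝒩) (𝒩⁻¹ • Γ) := by
  change Rτ = rotationMatrix τ at hR
  subst hR
  set W := Matrix.reindex (Equiv.prodAssoc (Fin 2) (Fin (2^c)) (Fin (2^n))).symm
    (Equiv.prodAssoc (Fin 2) (Fin (2^c)) (Fin (2^n))).symm V
  have henc : encVec W
      = (((τ / α) * α : ℝ) : ℂ) • encVec Uψ + ((((1 - τ) / β) * β : ℝ) : ℂ) • encVec Uφ := by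
    rw [div_mul_cancel₀ _ (by positivity), div_mul_cancel₀ _ (by positivity),
      encVec_reindex_prodAssoc_symm, hV]
    ext i
    exact conj_rotationMatrix_controlled_apply_zero_zero hτ0 hτ1 Uψ Uφ _ _
  have hΓW : IsVE W 1 (ε₀ / α + ε₁ / β) Γ := by
    refine ⟨Matrix.reindex_mem_unitaryGroup _ (hV ▸
      conj_rotationMatrix_controlled_mem_unitaryGroup hτ0 hτ1 hUψ.1 hUφ.1), ?_⟩
    rw [Complex.ofReal_one, one_smul, henc, hΓ]
    refine (norm_smul_add_smul_sub_le (by positivity)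
      (div_nonneg (sub_nonneg.2 hτ1) (by positivity)) hUψ.2 hUφ.2).trans ?_
    calc τ / α * ε₀ + (1 - τ) / β * ε₁ = τ * (ε₀ / α) + (1 - τ) * (ε₁ / β) := by ring
      _ ≤ 1 * (ε₀ / α) + 1 * (ε₁ / β) := by gcongr; linarith
      _ = ε₀ / α + ε₁ / β := by ring
  have hscaled := hΓW.smul (inv_nonneg.2 h𝒩pos.le)
  rwa [mul_one, inv_mul_eq_div] at hscaled
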